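/- arXiv:1403.2270 — 2 statements merged into one kernel-verified Lean document; each statement's English description precedes it below -/
import Mathlib

section
/- Let P(z) = a_n ∏_{ν=1}^{n} (z − z_ν) be a complex polynomial of degree n ≥ 1 whose zeros satisfy |z_ν| ≥ k_ν ≥ 1 for 1 ≤ ν ≤ n. Set t₀ = 1 + n / (∑_{ν=1}^{n} 1/(k_ν − 1)) if k_ν > 1 for all ν, and t₀ = 1 if k_ν = 1 for some ν. Then for every complex number α with |α| ≥ 1, max_{|z|=1} |D_α P(z)| ≤ n · ((|α| + t₀)/(1 + t₀)) · max_{|z|=1} |P(z)|. -/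
/-!
On `‖w‖ = 1` write `D_α P(w) = A + α B` with `A = n P(w) - w P'(w)` and `B = P'(w)`, and let
`M = max_{‖z‖=1} ‖P z‖`. Two pointwise estimates suffice: `t₀ ‖B‖ ≤ ‖A‖` and `‖A‖ + ‖B‖ ≤ n M`
give `‖A‖ + ‖α‖ ‖B‖ ≤ n M (‖α‖ + t₀) / (1 + t₀)`.

For the first, `S = w P'(w) / P(w) = ∑ w / (w - z_ν)` and the claim is `t₀ ‖S‖ ≤ ‖n - S‖`.
Each `w / (w - z_ν)` lies in the disk with diameter `[-1/(k_ν - 1), 1/(k_ν + 1)]`, so `S` lies in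
the disk with diameter `[-∑ 1/(k_ν - 1), ∑ 1/(k_ν + 1)]`. By Chebyshev's sum inequality this disk
sits inside the Apollonius disk `t₀ ‖S‖ ≤ ‖n - S‖`, whose diameter is `[-n/(t₀ - 1), n/(t₀ + 1)]`.
When some `k_ν = 1` the disks degenerate to the half-plane `Re ≤ 1/2` and `t₀ = 1`.

The second is the case `t₀ = 1` of the first, applied to `P + λ` with `‖λ‖ > M` (which has no
zeros in the open unit disk) and `λ` pointing against `A`.
-/

open Polynomial Finset

def segmentDisk (a b : ℝ) : Set ℂ :=
  Metric.closedBall (((a + b) / 2 : ℝ) : ℂ) ((b - a) / 2)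

lemma sum_mem_segmentDisk {ι : Type*} (s : Finset ι) {u : ι → ℂ} {a b : ι → ℝ}
    (hu : ∀ i ∈ s, u i ∈ segmentDisk (a i) (b i)) :
    ∑ i ∈ s, u i ∈ segmentDisk (∑ i ∈ s, a i) (∑ i ∈ s, b i) := by
  have h := dist_sum_sum_le_of_le s hu
  simp only [segmentDisk, Metric.mem_closedBall] at h ⊢
  push_cast [← sum_add_distrib, ← sum_sub_distrib, ← sum_div] at h ⊢
  exact h

lemma segmentDisk_subset_segmentDisk_right {a b b' : ℝ} (hb : b ≤ b') :
    segmentDisk a b ⊆ segmentDisk a b' := by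
  refine Metric.closedBall_subset_closedBall' ?_
  rw [Complex.dist_eq, ← Complex.ofReal_sub, Complex.norm_real, Real.norm_eq_abs,
    abs_of_nonpos (by linarith)]
  linarith

lemma norm_le_norm_sub_of_two_mul_re_le {m : ℝ} (hm : 0 ≤ m) {S : ℂ} (h : 2 * S.re ≤ m) :
    ‖S‖ ≤ ‖(m : ℂ) - S‖ := by
  rw [← sq_le_sq₀ (norm_nonneg _) (norm_nonneg _), Complex.sq_norm, Complex.sq_norm,
    Complex.normSq_apply, Complex.normSq_apply]
  simp only [Complex.sub_re, Complex.sub_im, Complex.ofReal_re, Complex.ofReal_im]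
  nlinarith

lemma mul_norm_le_norm_sub_of_mem_segmentDisk {t m : ℝ} (ht : 1 < t) {S : ℂ}
    (hS : S ∈ segmentDisk (-(m / (t - 1))) (m / (t + 1))) : t * ‖S‖ ≤ ‖(m : ℂ) - S‖ := by
  have ht2 : 0 < t ^ 2 - 1 := by nlinarith
  have ht1 : t - 1 ≠ 0 := by linarith
  have ht1' : t + 1 ≠ 0 := by linarith
  obtain ⟨β, rfl⟩ : ∃ β, m = β * (t ^ 2 - 1) := ⟨m / (t ^ 2 - 1), by field_simp⟩
  have hcenter : (-(β * (t ^ 2 - 1) / (t - 1)) + β * (t ^ 2 - 1) / (t + 1)) / 2 = -β := by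
    field_simp; ring
  have hradius : (β * (t ^ 2 - 1) / (t + 1) - -(β * (t ^ 2 - 1) / (t - 1))) / 2 = t * β := by
    field_simp; ring
  rw [segmentDisk, hcenter, hradius, Metric.mem_closedBall, Complex.dist_eq] at hS
  have hβ : 0 ≤ t * β := (norm_nonneg _).trans hS
  have hS2 := pow_le_pow_left₀ (norm_nonneg _) hS 2
  rw [← sq_le_sq₀ (by positivity) (norm_nonneg _), mul_pow, Complex.sq_norm, Complex.sq_norm]
  rw [Complex.sq_norm, Complex.normSq_apply] at hS2
  simp only [Complex.normSq_apply, Complex.sub_re, Complex.sub_im, Complex.ofReal_re,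
    Complex.ofReal_im, Complex.ofReal_neg, Complex.neg_re, Complex.neg_im] at hS2 ⊢
  nlinarith [mul_le_mul_of_nonneg_left hS2 ht2.le]

lemma two_mul_re_div_sub_le_one {w z : ℂ} (hw : ‖w‖ = 1) (hz : 1 ≤ ‖z‖) :
    2 * (w / (w - z)).re ≤ 1 := by
  rcases eq_or_ne w z with rfl | hwz
  · simp
  have hd : 0 < Complex.normSq (w - z) := Complex.normSq_pos.mpr (sub_ne_zero.mpr hwz)
  have hw2 : w.re * w.re + w.im * w.im = 1 := by
    rw [← Complex.normSq_apply, ← Complex.sq_norm, hw, one_pow]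
  have hz2 : 1 ≤ z.re * z.re + z.im * z.im := by
    rw [← Complex.normSq_apply, ← Complex.sq_norm]; nlinarith
  rw [Complex.div_re, ← add_div, mul_div_assoc', div_le_one hd, Complex.normSq_apply]
  simp only [Complex.sub_re, Complex.sub_im]
  nlinarith

lemma norm_sq_mul_sub_le_mul_norm_sub {w z : ℂ} {k : ℝ} (hw : ‖w‖ = 1) (hk : 1 ≤ k)
    (hz : k ≤ ‖z‖) :
    ‖(k ^ 2 : ℂ) * w - z‖ ≤ k * ‖w - z‖ := by
  have hw2 : w.re * w.re + w.im * w.im = 1 := by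
    rw [← Complex.normSq_apply, ← Complex.sq_norm, hw, one_pow]
  have hz2 : k ^ 2 ≤ z.re * z.re + z.im * z.im := by
    rw [← Complex.normSq_apply, ← Complex.sq_norm]; nlinarith
  rw [← sq_le_sq₀ (norm_nonneg _) (by positivity), mul_pow, Complex.sq_norm, Complex.sq_norm,
    Complex.normSq_apply, Complex.normSq_apply]
  simp only [Complex.sub_re, Complex.sub_im, Complex.mul_re, Complex.mul_im, ← Complex.ofReal_pow,
    Complex.ofReal_re, Complex.ofReal_im]
  nlinarith [mul_le_mul_of_nonneg_left hz2 (by nlinarith : (0:ℝ) ≤ k ^ 2 - 1),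
    congrArg (· * (k ^ 2 - k ^ 4)) hw2]

lemma div_sub_mem_segmentDisk {w z : ℂ} {k : ℝ} (hw : ‖w‖ = 1) (hk : 1 < k) (hz : k ≤ ‖z‖) :
    w / (w - z) ∈ segmentDisk (-(1 / (k - 1))) (1 / (k + 1)) := by
  have hwz : w - z ≠ 0 := by
    intro h; rw [← sub_eq_zero.mp h, hw] at hz; linarith
  have hk2 : 0 < k ^ 2 - 1 := by nlinarith
  have hk1 : k - 1 ≠ 0 := by linarith
  have hk1' : k + 1 ≠ 0 := by linarith
  have hcenter : (-(1 / (k - 1)) + 1 / (k + 1)) / 2 = -(1 / (k ^ 2 - 1)) := by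
    field_simp; ring
  have hradius : (1 / (k + 1) - -(1 / (k - 1))) / 2 = k / (k ^ 2 - 1) := by
    field_simp; ring
  have hid : w / (w - z) - ((-(1 / (k ^ 2 - 1)) : ℝ) : ℂ)
      = ((k ^ 2 : ℂ) * w - z) / (((k ^ 2 - 1 : ℝ) : ℂ) * (w - z)) := by
    have : ((k ^ 2 - 1 : ℝ) : ℂ) ≠ 0 := by exact_mod_cast hk2.ne'
    push_cast at this ⊢
    field_simp
    ring
  rw [segmentDisk, hcenter, hradius, Metric.mem_closedBall, Complex.dist_eq, hid, norm_div,
    norm_mul, Complex.norm_real, Real.norm_of_nonneg hk2.le, div_le_div_iff₀ (by positivity) hk2]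
  calc ‖(k ^ 2 : ℂ) * w - z‖ * (k ^ 2 - 1) ≤ k * ‖w - z‖ * (k ^ 2 - 1) := by
        gcongr; exact norm_sq_mul_sub_le_mul_norm_sub hw hk.le hz
    _ = k * ((k ^ 2 - 1) * ‖w - z‖) := by ring

lemma two_mul_re_sum_div_sub_le_card {w : ℂ} (hw : ‖w‖ = 1) {s : Multiset ℂ}
    (hs : ∀ r ∈ s, 1 ≤ ‖r‖) :
    2 * (s.map fun r => w / (w - r)).sum.re ≤ Multiset.card s := by
  induction s using Multiset.induction_on with
  | empty => simp
  | cons r s ih =>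
    simp only [Multiset.map_cons, Multiset.sum_cons, Complex.add_re, Multiset.card_cons,
      Nat.cast_succ, Multiset.forall_mem_cons] at hs ⊢
    linarith [ih hs.2, two_mul_re_div_sub_le_one hw hs.1]

lemma sum_one_div_mul_sum_one_div_le {ι : Type*} [Fintype ι] {k : ι → ℝ} (hk : ∀ ν, 1 < k ν) :
    (∑ ν, 1 / (k ν - 1)) * ∑ ν, 1 / (k ν + 1)
      ≤ Fintype.card ι * ∑ ν, 1 / (k ν - 1) * (1 / (k ν + 1)) := by
  refine Monovary.sum_mul_sum_le_card_mul_sum fun i j hij => ?_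
  rw [one_div_lt_one_div (by linarith [hk i]) (by linarith [hk j])] at hij
  exact one_div_le_one_div_of_le (by linarith [hk j]) (by linarith)

lemma one_add_card_div_mul_norm_sum_le {ι : Type*} [Fintype ι] [Nonempty ι] {k : ι → ℝ}
    (hk : ∀ ν, 1 < k ν) {u : ι → ℂ}
    (hu : ∀ ν, u ν ∈ segmentDisk (-(1 / (k ν - 1))) (1 / (k ν + 1))) :
    (1 + Fintype.card ι / ∑ ν, 1 / (k ν - 1)) * ‖∑ ν, u ν‖
      ≤ ‖(Fintype.card ι : ℂ) - ∑ ν, u ν‖ := by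
  set m : ℝ := (Fintype.card ι : ℝ)
  set s := ∑ ν, 1 / (k ν - 1)
  set p := ∑ ν, 1 / (k ν + 1)
  have hm : 0 < m := by simp [m, Fintype.card_pos]
  have hs : 0 < s := sum_pos (fun ν _ => one_div_pos.mpr (by linarith [hk ν])) univ_nonempty
  have hsp : s - p = 2 * ∑ ν, 1 / (k ν - 1) * (1 / (k ν + 1)) := by
    rw [← sum_sub_distrib, mul_sum]
    refine sum_congr rfl fun ν _ => ?_
    have h1 : k ν - 1 ≠ 0 := by linarith [hk ν]
    have h2 : k ν + 1 ≠ 0 := by linarith [hk ν]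
    field_simp
    ring
  have hp : p ≤ m / (1 + m / s + 1) := by
    rw [le_div_iff₀ (by positivity)]
    have := sum_one_div_mul_sum_one_div_le hk
    field_simp
    nlinarith
  have hsum : ∑ ν, u ν ∈ segmentDisk (-s) p := by
    simpa only [sum_neg_distrib] using sum_mem_segmentDisk univ fun ν _ => hu ν
  have hball : ∑ ν, u ν ∈ segmentDisk (-(m / (1 + m / s - 1))) (m / (1 + m / s + 1)) := by
    rw [add_sub_cancel_left, div_div_cancel₀ hm.ne']
    exact segmentDisk_subset_segmentDisk_right hp hsum
  exact_mod_cast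
    mul_norm_le_norm_sub_of_mem_segmentDisk (lt_add_of_pos_right 1 (by positivity)) hball

lemma roots_C_mul_prod_X_sub_C {ι : Type*} [Fintype ι] {a : ℂ} (ha : a ≠ 0) (z : ι → ℂ) :
    (C a * ∏ ν, (X - C (z ν))).roots = univ.val.map z := by
  rw [roots_C_mul _ ha, ← roots_multiset_prod_X_sub_C (univ.val.map z), Multiset.map_map]
  rfl

lemma mul_eval_derivative_div_eval_eq_sum_roots (P : ℂ[X]) {w : ℂ} (hPw : P.eval w ≠ 0) :
    w * P.derivative.eval w / P.eval w = (P.roots.map fun r => w / (w - r)).sum := by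
  rw [mul_div_assoc, (IsAlgClosed.splits P).eval_derivative_div_eval_of_ne_zero hPw,
    ← Multiset.sum_map_mul_left]
  simp only [mul_one_div]

lemma mul_norm_eval_derivative_le_of_mul_norm_le {P : ℂ[X]} {w c : ℂ} {t : ℝ} (hw : ‖w‖ = 1)
    (hPw : P.eval w ≠ 0)
    (h : t * ‖w * P.derivative.eval w / P.eval w‖ ≤ ‖c - w * P.derivative.eval w / P.eval w‖) :
    t * ‖P.derivative.eval w‖ ≤ ‖c * P.eval w - w * P.derivative.eval w‖ := by
  have hP : 0 < ‖P.eval w‖ := norm_pos_iff.mpr hPw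
  have hsub : c - w * P.derivative.eval w / P.eval w
      = (c * P.eval w - w * P.derivative.eval w) / P.eval w := by
    field_simp
  rw [hsub, norm_div, norm_div, norm_mul, hw, one_mul, mul_div_assoc',
    div_le_div_iff_of_pos_right hP] at h
  exact h

lemma norm_eval_derivative_le_of_one_le_norm_roots {P : ℂ[X]} (hroots : ∀ r ∈ P.roots, 1 ≤ ‖r‖)
    {w : ℂ} (hw : ‖w‖ = 1) :
    ‖P.derivative.eval w‖ ≤ ‖P.natDegree * P.eval w - w * P.derivative.eval w‖ := by
  by_cases hPw : P.eval w = 0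
  · simp [hPw, hw]
  have h := norm_le_norm_sub_of_two_mul_re_le (Nat.cast_nonneg _)
    (two_mul_re_sum_div_sub_le_card hw hroots)
  rw [← mul_eval_derivative_div_eval_eq_sum_roots P hPw, Complex.ofReal_natCast,
    ← (IsAlgClosed.splits P).natDegree_eq_card_roots] at h
  simpa using mul_norm_eval_derivative_le_of_mul_norm_le (t := 1) hw hPw (by simpa using h)

lemma one_add_card_div_mul_norm_eval_derivative_le {ι : Type*} [Fintype ι] [Nonempty ι]
    {a : ℂ} (ha : a ≠ 0) {z : ι → ℂ} {P : ℂ[X]} (hP : P = C a * ∏ ν, (X - C (z ν)))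
    {k : ι → ℝ} (hk : ∀ ν, 1 < k ν) (hzk : ∀ ν, k ν ≤ ‖z ν‖) {w : ℂ} (hw : ‖w‖ = 1) :
    (1 + Fintype.card ι / ∑ ν, 1 / (k ν - 1)) * ‖P.derivative.eval w‖
      ≤ ‖Fintype.card ι * P.eval w - w * P.derivative.eval w‖ := by
  have hPw : P.eval w ≠ 0 := by
    rw [hP, eval_mul, eval_C, eval_prod]
    refine mul_ne_zero ha (prod_ne_zero_iff.mpr fun ν _ => ?_)
    rw [eval_sub, eval_X, eval_C, sub_ne_zero]
    rintro rfl
    linarith [hk ν, hzk ν]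
  refine mul_norm_eval_derivative_le_of_mul_norm_le hw hPw ?_
  rw [mul_eval_derivative_div_eval_eq_sum_roots P hPw, hP, roots_C_mul_prod_X_sub_C ha,
    Multiset.map_map, Finset.sum_map_val]
  exact one_add_card_div_mul_norm_sum_le hk fun ν => div_sub_mem_segmentDisk hw (hk ν) (hzk ν)

lemma norm_eval_derivative_le_norm_add {P : ℂ[X]} {M : ℝ}
    (hM : ∀ x : ℂ, ‖x‖ ≤ 1 → ‖P.eval x‖ ≤ M) {c : ℂ} (hc : M < ‖c‖) {w : ℂ} (hw : ‖w‖ = 1) :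
    ‖P.derivative.eval w‖
      ≤ ‖P.natDegree * P.eval w - w * P.derivative.eval w + P.natDegree * c‖ := by
  have hroots : ∀ r ∈ (P + C c).roots, 1 ≤ ‖r‖ := by
    intro r hr
    by_contra! hr1
    have hPr : P.eval r = -c := eq_neg_of_add_eq_zero_left (by simpa using isRoot_of_mem_roots hr)
    have := hM r hr1.le
    rw [hPr, norm_neg] at this
    linarith
  have h := norm_eval_derivative_le_of_one_le_norm_roots hroots hw
  rw [natDegree_add_C, derivative_add, derivative_C, add_zero, eval_add, eval_C] at h
  exact h.trans_eq (congrArg norm (by ring))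

lemma norm_sub_add_norm_eval_derivative_le {P : ℂ[X]} {M : ℝ}
    (hM : ∀ x : ℂ, ‖x‖ ≤ 1 → ‖P.eval x‖ ≤ M) {w : ℂ} (hw : ‖w‖ = 1) :
    ‖P.natDegree * P.eval w - w * P.derivative.eval w‖ + ‖P.derivative.eval w‖
      ≤ P.natDegree * M := by
  set n := P.natDegree
  rcases Nat.eq_zero_or_pos n with hn | hn
  · simp [derivative_of_natDegree_zero hn, n, hn]
  set A := (n : ℂ) * P.eval w - w * P.derivative.eval w
  set B := P.derivative.eval w
  have hM0 : 0 ≤ M := (norm_nonneg _).trans (hM 0 (by simp))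
  have hn' : (0 : ℝ) < n := Nat.cast_pos.mpr hn
  obtain ⟨u, hu, hAu⟩ : ∃ u : ℂ, ‖u‖ = 1 ∧ A = ‖A‖ * u :=
    ⟨_, Complex.norm_exp_ofReal_mul_I _, (Complex.norm_mul_exp_arg_mul_I A).symm⟩
  -- Perturb `P` by the constant `-(c / n) u`, of modulus above `M` and pointing against `A`.
  have hperturb : ∀ c : ℝ, n * M < c → ‖B‖ ≤ |‖A‖ - c| := by
    intro c hc
    have hcM : M < c / n := by rwa [lt_div_iff₀' hn']
    have h := norm_eval_derivative_le_norm_add hM (c := -((c / n : ℝ) * u))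
      (by rwa [norm_neg, norm_mul, hu, mul_one, Complex.norm_real, Real.norm_of_nonneg
        (hM0.trans hcM.le)]) hw
    have hshift : A + n * -((c / n : ℝ) * u) = ((‖A‖ - c : ℝ) : ℂ) * u := by
      have hnc : (n : ℂ) * ((c / n : ℝ) : ℂ) = c := by
        have : (n : ℂ) ≠ 0 := by exact_mod_cast hn.ne'
        push_cast
        field_simp
      push_cast at hnc ⊢
      linear_combination hAu - u * hnc
    rwa [hshift, norm_mul, hu, mul_one, Complex.norm_real, Real.norm_eq_abs] at h
  have hA : ‖A‖ ≤ n * M := by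
    by_contra! hA
    have hB : B = 0 := by simpa using hperturb ‖A‖ hA
    have : ‖A‖ ≤ n * M := by
      rw [show A = n * P.eval w - w * B from rfl, hB, mul_zero, sub_zero, norm_mul,
        Complex.norm_natCast]
      exact mul_le_mul_of_nonneg_left (hM w hw.le) hn'.le
    linarith
  refine le_of_forall_gt_imp_ge_of_dense fun c hc => ?_
  have := hperturb c hc
  rw [abs_of_nonpos (by linarith)] at this
  linarith

lemma norm_le_sSup_image_norm_sphere {f : ℂ → ℂ} (hf : Differentiable ℂ f) {x : ℂ}
    (hx : ‖x‖ ≤ 1) : ‖f x‖ ≤ sSup ((fun ζ => ‖f ζ‖) '' {ζ : ℂ | ‖ζ‖ = 1}) := by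
  have hsphere : {ζ : ℂ | ‖ζ‖ = 1} = Metric.sphere 0 1 := by
    ext ζ
    simp
  have hbdd : BddAbove ((fun ζ => ‖f ζ‖) '' {ζ : ℂ | ‖ζ‖ = 1}) := by
    rw [hsphere]
    exact ((isCompact_sphere 0 1).image (continuous_norm.comp hf.continuous)).bddAbove
  refine Complex.norm_le_of_forall_mem_frontier_norm_le (Metric.isBounded_ball (x := 0) (r := 1))
    hf.diffContOnCl (fun ζ hζ => le_csSup hbdd ⟨ζ, ?_, rfl⟩) ?_
  · simpa [frontier_ball (0 : ℂ) one_ne_zero] using hζ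
  · simpa [closure_ball (0 : ℂ) one_ne_zero] using hx

lemma add_mul_le_div_mul {A B N c t : ℝ} (hc : 1 ≤ c) (ht : 0 ≤ t) (htB : t * B ≤ A)
    (hAB : A + B ≤ N) : A + c * B ≤ (c + t) / (1 + t) * N := by
  rw [div_mul_eq_mul_div, le_div_iff₀ (by linarith)]
  nlinarith [mul_le_mul_of_nonneg_left hAB (by linarith : 0 ≤ c + t),
    mul_nonneg (sub_nonneg.mpr hc) (sub_nonneg.mpr htB)]

/-- **Theorem 1.** If `P(z) = a ∏ (z - z_ν)` has degree `n ≥ 1` and its zeros satisfy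
`|z_ν| ≥ k_ν ≥ 1`, then with `t₀` as defined, for `|α| ≥ 1`,
`max_{|z|=1} |D_α P(z)| ≤ n ((|α| + t₀)/(1 + t₀)) max_{|z|=1} |P(z)|`. -/
theorem stmt_0 (n : ℕ) (hn : 1 ≤ n) (a : ℂ) (ha : a ≠ 0) (z : Fin n → ℂ)
    (P : Polynomial ℂ)
    (hP : P = Polynomial.C a * ∏ ν, (Polynomial.X - Polynomial.C (z ν)))
    (k : Fin n → ℝ) (hk1 : ∀ ν, 1 ≤ k ν) (hzk : ∀ ν, k ν ≤ ‖z ν‖)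
    (t₀ : ℝ)
    (ht₀ : (∀ ν, 1 < k ν) → t₀ = 1 + (n : ℝ) / ∑ ν, 1 / (k ν - 1))
    (ht₀' : (∃ ν, k ν = 1) → t₀ = 1)
    (α : ℂ) (hα : 1 ≤ ‖α‖) :
    ∀ w : ℂ, ‖w‖ = 1 →
      ‖(n : ℂ) * P.eval w + (α - w) * P.derivative.eval w‖ ≤
        (n : ℝ) * ((‖α‖ + t₀) / (1 + t₀)) *
          sSup ((fun ζ : ℂ => ‖P.eval ζ‖) '' {ζ : ℂ | ‖ζ‖ = 1}) := by
  intro w hw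
  have : Nonempty (Fin n) := ⟨⟨0, hn⟩⟩
  have hroots := roots_C_mul_prod_X_sub_C ha z
  have hdeg : P.natDegree = n := by
    rw [(IsAlgClosed.splits P).natDegree_eq_card_roots, hP, hroots]
    simp
  obtain ⟨ht₀_nonneg, hkey⟩ : 0 ≤ t₀ ∧
      t₀ * ‖P.derivative.eval w‖ ≤ ‖n * P.eval w - w * P.derivative.eval w‖ := by
    by_cases hk : ∀ ν, 1 < k ν
    · rw [ht₀ hk]
      refine ⟨?_, by simpa using one_add_card_div_mul_norm_eval_derivative_le ha hP hk hzk hw⟩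
      have : 0 ≤ ∑ ν, 1 / (k ν - 1) := sum_nonneg fun ν _ => by simp [(hk ν).le]
      positivity
    · obtain ⟨ν, hν⟩ := not_forall.mp hk
      rw [ht₀' ⟨ν, le_antisymm (le_of_not_gt hν) (hk1 ν)⟩, one_mul, ← hdeg]
      refine ⟨zero_le_one, norm_eval_derivative_le_of_one_le_norm_roots ?_ hw⟩
      rw [hP, hroots]
      simpa using fun ν => (hk1 ν).trans (hzk ν)
  have hM (x : ℂ) (hx : ‖x‖ ≤ 1) := norm_le_sSup_image_norm_sphere P.differentiable hx
  calc ‖(n : ℂ) * P.eval w + (α - w) * P.derivative.eval w‖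
      = ‖(n * P.eval w - w * P.derivative.eval w) + α * P.derivative.eval w‖ := by ring_nf
    _ ≤ ‖n * P.eval w - w * P.derivative.eval w‖ + ‖α‖ * ‖P.derivative.eval w‖ :=
        (norm_add_le _ _).trans_eq (by rw [norm_mul])
    _ ≤ (‖α‖ + t₀) / (1 + t₀) * (n * sSup ((fun ζ : ℂ => ‖P.eval ζ‖) '' {ζ : ℂ | ‖ζ‖ = 1})) :=
        add_mul_le_div_mul hα ht₀_nonneg hkey
          (hdeg ▸ norm_sub_add_norm_eval_derivative_le hM hw)
    _ = _ := by ring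
end

section
/- Let P be a complex polynomial of degree n ≥ 1 and let Q(z) = z^n · conj(P(1/conj(z))). Then for every z with |z| = 1, |P′(z)| + |Q′(z)| ≤ n · max_{|z|=1} |P(z)|. -/
/-!
Let `M` bound `|P|` on the unit circle, hence on the closed disc. For `T > M` and `|u| = 1`, the
polynomial `F = P - T u` has no zeros in the closed disc, so on `|w| = 1` every term of
`w F'(w) / F(w) = ∑ w / (w - a)` has real part at most `1 / 2`; hence
`|F'(w)| ≤ |n F(w) - w F'(w)|`. On the circle `|n P - w P'| = |Q'|`, so taking `u` in the
direction of `n P(w) - w P'(w)` gives `|P'(w)| ≤ ||Q'(w)| - n T|`. As `Q` is bounded by `M` on the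
circle as well and reflects back to `P`, also `|Q'(w)| ≤ ||P'(w)| - n T|`, and the two inequalities
together force `|P'(w)| + |Q'(w)| ≤ n T`.
-/

open Polynomial

namespace Complex

theorem re_div_sub_le_half {z a : ℂ} (hz : ‖z‖ = 1) (ha : 1 ≤ ‖a‖) :
    (z / (z - a)).re ≤ 1 / 2 := by
  rcases eq_or_ne z a with rfl | hza
  · simp -- junk value: `z / 0 = 0`
  have hz2 : normSq z = 1 := by rw [normSq_eq_norm_sq, hz, one_pow]
  have ha2 : 1 ≤ normSq a := one_le_normSq_iff.mpr ha
  have hpos : 0 < normSq (z - a) := normSq_pos.mpr (sub_ne_zero.mpr hza)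
  rw [div_re, ← add_div, div_le_iff₀ hpos]
  rw [normSq_apply] at hz2 ha2 hpos ⊢
  simp only [sub_re, sub_im] at hpos ⊢
  nlinarith

theorem norm_le_norm_sub_of_re_le_half {c : ℝ} (hc : 0 ≤ c) {r : ℂ} (hr : r.re ≤ c / 2) :
    ‖r‖ ≤ ‖(c : ℂ) - r‖ := by
  rw [← sq_le_sq₀ (norm_nonneg _) (norm_nonneg _), Complex.sq_norm, Complex.sq_norm,
    normSq_apply, normSq_apply]
  simp only [sub_re, sub_im, ofReal_re, ofReal_im, zero_sub]
  nlinarith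

theorem norm_le_of_forall_norm_eq_one_le {f : ℂ → ℂ} (hf : Differentiable ℂ f) {M : ℝ}
    (hM : ∀ ζ : ℂ, ‖ζ‖ = 1 → ‖f ζ‖ ≤ M) (z : ℂ) (hz : ‖z‖ ≤ 1) : ‖f z‖ ≤ M := by
  refine norm_le_of_forall_mem_frontier_norm_le (U := Metric.ball 0 1)
    Metric.isBounded_ball hf.diffContOnCl (fun ζ hζ => hM ζ ?_) ?_
  · simpa [frontier_ball (0 : ℂ) one_ne_zero] using hζ
  · simpa [closure_ball (0 : ℂ) one_ne_zero] using hz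

end Complex

theorem add_le_of_le_abs_sub {a b t : ℝ} (ht : 0 < t) (ha : a ≤ |b - t|) (hb : b ≤ |a - t|) :
    a + b ≤ t := by
  rcases abs_cases (b - t) with ⟨h₁, -⟩ | ⟨h₁, -⟩ <;>
    rcases abs_cases (a - t) with ⟨h₂, -⟩ | ⟨h₂, -⟩ <;> linarith

namespace Polynomial

section Semiring

variable {R : Type*} [Semiring R]

theorem coeff_X_mul_derivative (p : R[X]) (k : ℕ) :
    (X * derivative p).coeff k = k * p.coeff k := by
  rcases k with _ | k
  · simp
  · rw [coeff_X_mul, coeff_derivative, ← Nat.cast_succ, Nat.cast_comm]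

theorem natDegree_X_mul_derivative_le (p : R[X]) : (X * derivative p).natDegree ≤ p.natDegree :=
  natDegree_le_iff_coeff_eq_zero.mpr fun k hk => by
    rw [coeff_X_mul_derivative, coeff_eq_zero_of_natDegree_lt hk, mul_zero]

theorem X_mul_derivative_reflect_add {N : ℕ} {p : R[X]} (hp : p.natDegree ≤ N) :
    X * derivative (reflect N p) + reflect N (X * derivative p) = C (N : R) * reflect N p := by
  ext k
  simp only [coeff_add, coeff_X_mul_derivative, coeff_reflect, coeff_C_mul]
  rcases le_or_gt k N with hk | hk
  · rw [revAt_le hk, ← add_mul, ← Nat.cast_add, Nat.add_sub_cancel' hk]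
  · rw [revAt_eq_self_of_lt hk, coeff_eq_zero_of_natDegree_lt (hp.trans_lt hk)]
    simp

end Semiring

theorem re_mul_eval_derivative_div_eval_le {F : ℂ[X]} {n : ℕ} (hF : F.natDegree ≤ n)
    (hF0 : ∀ z : ℂ, ‖z‖ ≤ 1 → F.eval z ≠ 0) {w : ℂ} (hw : ‖w‖ = 1) :
    (w * F.derivative.eval w / F.eval w).re ≤ n / 2 := by
  have hlog : w * F.derivative.eval w / F.eval w = (F.roots.map fun a => w / (w - a)).sum := by
    rw [mul_div_assoc, (IsAlgClosed.splits F).eval_derivative_div_eval_of_ne_zero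
      (hF0 w hw.le), ← Multiset.sum_map_mul_left]
    simp only [mul_one_div]
  have hcard : (Multiset.card F.roots : ℝ) ≤ n := by exact_mod_cast F.card_roots'.trans hF
  have hterm : ∀ a ∈ F.roots, (w / (w - a)).re ≤ 1 / 2 := fun a ha =>
    Complex.re_div_sub_le_half hw <| not_lt.mp fun h =>
      hF0 a h.le (mem_roots'.mp ha).2
  calc (w * F.derivative.eval w / F.eval w).re
      = (F.roots.map fun a => (w / (w - a)).re).sum := by
        rw [hlog, ← Complex.coe_reAddGroupHom, map_multiset_sum, Multiset.map_map]; rfl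
    _ ≤ Multiset.card F.roots • (1 / 2 : ℝ) := by
        simpa using Multiset.sum_le_card_nsmul _ _ (Multiset.forall_mem_map_iff.mpr hterm)
    _ ≤ n / 2 := by rw [nsmul_eq_mul]; linarith

theorem norm_eval_derivative_le_of_forall_eval_ne_zero {F : ℂ[X]} {n : ℕ}
    (hF : F.natDegree ≤ n) (hF0 : ∀ z : ℂ, ‖z‖ ≤ 1 → F.eval z ≠ 0) {w : ℂ} (hw : ‖w‖ = 1) :
    ‖F.derivative.eval w‖ ≤ ‖n * F.eval w - w * F.derivative.eval w‖ := by
  have hFw := hF0 w hw.le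
  have h := Complex.norm_le_norm_sub_of_re_le_half n.cast_nonneg
    (re_mul_eval_derivative_div_eval_le hF hF0 hw)
  calc ‖F.derivative.eval w‖ = ‖w * F.derivative.eval w / F.eval w‖ * ‖F.eval w‖ := by
        rw [norm_div, norm_mul, hw, one_mul, div_mul_cancel₀ _ (norm_ne_zero_iff.mpr hFw)]
    _ ≤ ‖(n : ℂ) - w * F.derivative.eval w / F.eval w‖ * ‖F.eval w‖ := by gcongr; simpa using h
    _ = ‖n * F.eval w - w * F.derivative.eval w‖ := by
        rw [← norm_mul, sub_mul, div_mul_cancel₀ _ hFw]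

noncomputable def conjReflect (N : ℕ) (p : ℂ[X]) : ℂ[X] :=
  reflect N (p.map (starRingEnd ℂ))

variable {N : ℕ} {p : ℂ[X]}

theorem conjReflect_conjReflect : conjReflect N (conjReflect N p) = p := by
  simp [conjReflect, ← reflect_map, Polynomial.map_map]

theorem natDegree_conjReflect_le (hp : p.natDegree ≤ N) : (conjReflect N p).natDegree ≤ N :=
  natDegree_reflect_le.trans <| max_le le_rfl <| natDegree_map_le.trans hp

theorem eval_conjReflect (hp : p.natDegree ≤ N) {w : ℂ} (hw : ‖w‖ = 1) :
    (conjReflect N p).eval w = w ^ N * starRingEnd ℂ (p.eval w) := by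
  have hw' : starRingEnd ℂ w * w = 1 := by rw [Complex.conj_mul', hw]; simp
  let _ : Invertible (starRingEnd ℂ w) := ⟨w, by rwa [mul_comm], hw'⟩
  have h := eval₂_reflect_mul_pow (RingHom.id ℂ) (starRingEnd ℂ w) N _
    ((natDegree_map_le (f := starRingEnd ℂ)).trans hp)
  rw [eval₂_id, eval₂_id, show ⅟(starRingEnd ℂ w) = w from rfl] at h
  rw [← eval_map_apply, ← h, conjReflect, mul_left_comm, ← mul_pow, mul_comm w, hw', one_pow,
    mul_one]

theorem norm_mul_eval_conjReflect_sub (hp : p.natDegree ≤ N) {w : ℂ} (hw : ‖w‖ = 1) :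
    ‖N * (conjReflect N p).eval w - w * (conjReflect N p).derivative.eval w‖ =
      ‖p.derivative.eval w‖ := by
  have hp' : (p.map (starRingEnd ℂ)).natDegree ≤ N := natDegree_map_le.trans hp
  -- `N Q - X Q'` is the reflection of `X p̄'`, whose value at `w` is `w ^ N * conj (w p'(w))`.
  have h := congrArg (eval w) (X_mul_derivative_reflect_add hp')
  rw [eval_add, eval_mul, eval_X, eval_mul, eval_C, derivative_map, ← Polynomial.map_X
    (starRingEnd ℂ), ← Polynomial.map_mul] at h
  have he := eval_conjReflect ((natDegree_X_mul_derivative_le p).trans hp) hw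
  unfold conjReflect at he ⊢
  rw [← h, add_sub_cancel_left, he]
  simp [hw]

theorem norm_eval_derivative_le_abs_sub {R : ℂ[X]} {n : ℕ} (hR : R.natDegree ≤ n) {M T : ℝ}
    (hM : ∀ z : ℂ, ‖z‖ ≤ 1 → ‖R.eval z‖ ≤ M) (hT : M < T) {w : ℂ} (hw : ‖w‖ = 1) :
    ‖R.derivative.eval w‖ ≤ |‖n * R.eval w - w * R.derivative.eval w‖ - n * T| := by
  set B := n * R.eval w - w * R.derivative.eval w with hB
  set u := Complex.exp (B.arg * Complex.I)
  have hu : ‖u‖ = 1 := Complex.norm_exp_ofReal_mul_I _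
  have hT0 : 0 < T := (norm_nonneg _).trans_lt ((hM 0 (by simp)).trans_lt hT)
  have hF : ∀ z : ℂ, ‖z‖ ≤ 1 → (R - C (T * u)).eval z ≠ 0 := fun z hz h => by
    rw [eval_sub, eval_C, sub_eq_zero] at h
    have := hM z hz
    rw [h, norm_mul, hu, Complex.norm_real, Real.norm_of_nonneg hT0.le, mul_one] at this
    linarith
  have h := norm_eval_derivative_le_of_forall_eval_ne_zero (natDegree_sub_C.trans_le hR) hF hw
  rw [derivative_sub, derivative_C, sub_zero] at h
  calc ‖R.derivative.eval w‖ ≤ ‖n * (R - C (T * u)).eval w - w * R.derivative.eval w‖ := h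
    _ = ‖((‖B‖ - n * T : ℝ) : ℂ) * u‖ := by
        rw [Complex.ofReal_sub, sub_mul, Complex.ofReal_mul, mul_assoc,
          Complex.norm_mul_exp_arg_mul_I, eval_sub, eval_C, hB]
        push_cast
        ring_nf
    _ = |‖B‖ - n * T| := by rw [norm_mul, hu, mul_one, Complex.norm_real, Real.norm_eq_abs]

theorem norm_eval_derivative_add_norm_eval_derivative_conjReflect_le {n : ℕ} (hn : 1 ≤ n)
    {p : ℂ[X]} (hp : p.natDegree ≤ n) {M : ℝ} (hM : ∀ ζ : ℂ, ‖ζ‖ = 1 → ‖p.eval ζ‖ ≤ M)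
    {w : ℂ} (hw : ‖w‖ = 1) :
    ‖p.derivative.eval w‖ + ‖(conjReflect n p).derivative.eval w‖ ≤ n * M := by
  set Q := conjReflect n p
  have hQdeg : Q.natDegree ≤ n := natDegree_conjReflect_le hp
  have hPdisc := Complex.norm_le_of_forall_norm_eq_one_le p.differentiable hM
  have hQdisc := Complex.norm_le_of_forall_norm_eq_one_le Q.differentiable fun ζ hζ => by
    rw [eval_conjReflect hp hζ, norm_mul, norm_pow, hζ, one_pow, one_mul, Complex.norm_conj]
    exact hM ζ hζ
  have hn0 : (0 : ℝ) < n := by exact_mod_cast hn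
  refine le_of_forall_gt_imp_ge_of_dense fun x hx => ?_
  have hT : M < x / n := by rwa [lt_div_iff₀ hn0, mul_comm]
  have hP := norm_eval_derivative_le_abs_sub hp hPdisc hT hw
  have hQ := norm_eval_derivative_le_abs_sub hQdeg hQdisc hT hw
  rw [← conjReflect_conjReflect (N := n) (p := p), norm_mul_eval_conjReflect_sub hQdeg hw,
    conjReflect_conjReflect] at hP
  rw [norm_mul_eval_conjReflect_sub hp hw] at hQ
  rw [mul_div_cancel₀ _ hn0.ne'] at hP hQ
  have hM0 : 0 ≤ M := (norm_nonneg _).trans (hPdisc 0 (by simp))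
  exact add_le_of_le_abs_sub ((mul_nonneg hn0.le hM0).trans_lt hx) hP hQ

end Polynomial

/-- **Lemma 2 (Govil–Rahman).** If `P` has degree `n ≥ 1` and
`Q(z) = z^n conj(P(1/conj z))`, then `|P'(z)| + |Q'(z)| ≤ n max_{|z|=1} |P(z)|`
on `|z| = 1`. -/
theorem stmt_3 (n : ℕ) (hn : 1 ≤ n) (P Q : Polynomial ℂ) (hdeg : P.natDegree = n)
    (hQ : Q = Polynomial.reflect n (P.map (starRingEnd ℂ))) :
    ∀ w : ℂ, ‖w‖ = 1 →
      ‖P.derivative.eval w‖ + ‖Q.derivative.eval w‖ ≤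
        (n : ℝ) *
          sSup ((fun ζ : ℂ => ‖P.eval ζ‖) '' {ζ : ℂ | ‖ζ‖ = 1}) := by
  intro w hw
  have hbdd : BddAbove ((fun ζ : ℂ => ‖P.eval ζ‖) '' {ζ : ℂ | ‖ζ‖ = 1}) := by
    have hS : {ζ : ℂ | ‖ζ‖ = 1} = Metric.sphere 0 1 := by ext; simp
    rw [hS]
    exact (isCompact_sphere 0 1).bddAbove_image P.continuous.norm.continuousOn
  rw [hQ]
  exact norm_eval_derivative_add_norm_eval_derivative_conjReflect_le hn hdeg.le
    (fun ζ hζ => le_csSup hbdd ⟨ζ, hζ, rfl⟩) hw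
end
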